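/- arXiv:2109.14764 — 6 statements merged into one kernel-verified Lean document; each statement's English description precedes it below -/
import Mathlib

section
/- For every real number α ≥ 0, it holds that log*(α) − log*(log*(α) + 1) − 1 ≤ log⊛(α) ≤ log*(α). -/
/-- Base-2 logarithm with the convention `log x = log₂ (max 1 x)`. -/
noncomputable def lg (x : ℝ) : ℝ := Real.logb 2 (max 1 x)

/-- `log*(α)`: the smallest natural number `k` with `log^[k](α) ≤ 1`. -/
noncomputable def logStar (α : ℝ) : ℕ := sInf {k : ℕ | lg^[k] α ≤ 1}

/-- `log⊛(α)`: the largest natural number `k` with `log^[k](α) ≥ k`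
(for `α = 0` this set is `{0}`, giving the convention `log⊛(0) = 0`). -/
noncomputable def logCirc (α : ℝ) : ℕ := sSup {k : ℕ | (k : ℝ) ≤ lg^[k] α}

noncomputable def tower : ℕ → ℝ
  | 0 => 1
  | k + 1 => (2 : ℝ) ^ tower k

lemma one_le_tower : ∀ k, 1 ≤ tower k
  | 0 => le_refl 1
  | k + 1 => by
    have h := Real.rpow_le_rpow_of_exponent_le (by norm_num : (1:ℝ) ≤ 2)
      (le_trans zero_le_one (one_le_tower k))
    simpa [tower, Real.rpow_zero] using
      (Real.rpow_le_rpow_of_exponent_le (by norm_num : (1:ℝ) ≤ 2)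
        (le_trans zero_le_one (one_le_tower k)) :
        (2:ℝ) ^ (0:ℝ) ≤ 2 ^ tower k)

lemma tower_add_one_le (k : ℕ) : tower k + 1 ≤ tower (k + 1) := by
  have h := one_add_mul_self_le_rpow_one_add (by norm_num : (-1:ℝ) ≤ 1) (one_le_tower k)
  show tower k + 1 ≤ (2:ℝ) ^ tower k
  calc tower k + 1 = 1 + tower k * 1 := by ring
    _ ≤ ((1:ℝ) + 1) ^ tower k := h
    _ = (2:ℝ) ^ tower k := by norm_num

lemma tower_lt_succ (k : ℕ) : tower k < tower (k + 1) :=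
  lt_of_lt_of_le (lt_add_one _) (tower_add_one_le k)

lemma tower_mono : Monotone tower :=
  monotone_nat_of_le_succ fun k => (tower_lt_succ k).le

lemma nat_le_tower (k : ℕ) : (k : ℝ) ≤ tower k := by
  induction k with
  | zero => norm_num [tower]
  | succ n ih =>
    push_cast
    calc (n : ℝ) + 1 ≤ tower n + 1 := by linarith
    _ ≤ tower (n + 1) := tower_add_one_le n

lemma lg_le_iff {x t : ℝ} (ht : 0 ≤ t) : lg x ≤ t ↔ x ≤ (2 : ℝ) ^ t := by
  have hpos : (0:ℝ) < max 1 x := lt_of_lt_of_le zero_lt_one (le_max_left _ _)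
  have h1 : (1:ℝ) ≤ (2:ℝ) ^ t := by
    simpa [Real.rpow_zero] using
      (Real.rpow_le_rpow_of_exponent_le (by norm_num : (1:ℝ) ≤ 2) ht :
        (2:ℝ) ^ (0:ℝ) ≤ 2 ^ t)
  rw [lg, Real.logb_le_iff_le_rpow (by norm_num : (1:ℝ) < 2) hpos, max_le_iff]
  exact ⟨fun h => h.2, fun h => ⟨h1, h⟩⟩

lemma lg_nonneg (x : ℝ) : 0 ≤ lg x :=
  Real.logb_nonneg (by norm_num) (le_max_left _ _)

lemma iter_le_tower (k : ℕ) : ∀ (m : ℕ) (x : ℝ), lg^[k] x ≤ tower m ↔ x ≤ tower (k + m) := by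
  induction k with
  | zero => intro m x; simp
  | succ n ih =>
    intro m x
    rw [Function.iterate_succ_apply, ih m (lg x),
      lg_le_iff (le_trans zero_le_one (one_le_tower (n + m)))]
    have : tower (n + m + 1) = (2:ℝ) ^ tower (n + m) := rfl
    rw [← this]
    have hidx : n + 1 + m = n + m + 1 := by omega
    rw [hidx]

lemma lt_of_tower_lt_lg {x : ℝ} {m : ℕ} (h : tower m < lg x) : tower (m + 1) < x := by
  by_contra hc
  push_neg at hc
  have : lg x ≤ tower m := by
    rw [lg_le_iff (le_trans zero_le_one (one_le_tower m))]
    exact hc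
  linarith

lemma logStar_set_nonempty (α : ℝ) : {k : ℕ | lg^[k] α ≤ 1}.Nonempty := by
  refine ⟨⌈α⌉₊, ?_⟩
  have h1 : α ≤ tower ⌈α⌉₊ := le_trans (Nat.le_ceil α) (nat_le_tower _)
  have := (iter_le_tower ⌈α⌉₊ 0 α).mpr (by simpa using h1)
  simpa [tower] using this

lemma logStar_spec (α : ℝ) : lg^[logStar α] α ≤ 1 :=
  Nat.sInf_mem (logStar_set_nonempty α)

lemma one_lt_iter_of_lt_logStar {α : ℝ} {m : ℕ} (h : m < logStar α) : 1 < lg^[m] α := by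
  have := Nat.notMem_of_lt_sInf h
  simp only [Set.mem_setOf_eq, not_le] at this
  exact this

lemma key (α : ℝ) : ∀ (j m : ℕ), j + m < logStar α → tower j < lg^[m] α := by
  intro j
  induction j with
  | zero =>
    intro m h
    simpa [tower] using one_lt_iter_of_lt_logStar (by omega : m < logStar α)
  | succ n ih =>
    intro m h
    have h1 : tower n < lg^[m + 1] α := ih (m + 1) (by omega)
    rw [Function.iterate_succ_apply'] at h1
    exact lt_of_tower_lt_lg h1

lemma mem_le_logStar {α : ℝ} (hα : 0 ≤ α) {k : ℕ} (hk : (k : ℝ) ≤ lg^[k] α) :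
    k ≤ logStar α := by
  by_contra hc
  push_neg at hc
  set s := logStar α with hs
  have hαs : α ≤ tower s := by
    have := logStar_spec α
    have h0 : lg^[s] α ≤ tower 0 := by simpa [tower] using this
    simpa using (iter_le_tower s 0 α).mp h0
  have hαk : α ≤ tower k := le_trans hαs (tower_mono (le_of_lt hc))
  have hk1 : lg^[k] α ≤ 1 := by
    have := (iter_le_tower k 0 α).mpr (by simpa using hαk)
    simpa [tower] using this
  have : (k : ℝ) ≤ 1 := le_trans hk hk1
  have hkn : k ≤ 1 := by exact_mod_cast this
  interval_cases k
  · omega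
  · -- k = 1, s = 0
    have hs0 : s = 0 := by omega
    have hα1 : α ≤ 1 := by
      have h := logStar_spec α
      rw [← hs, hs0] at h
      simpa using h
    have : lg α = 0 := by
      rw [lg, max_eq_left hα1, Real.logb_one]
    rw [show lg^[1] α = lg α from rfl, this] at hk
    norm_num at hk

lemma logCirc_bddAbove {α : ℝ} (hα : 0 ≤ α) :
    BddAbove {k : ℕ | (k : ℝ) ≤ lg^[k] α} :=
  ⟨logStar α, fun _ hk => mem_le_logStar hα hk⟩

theorem stmt0 (α : ℝ) (hα : 0 ≤ α) :
    (logStar α : ℤ) - (logStar ((logStar α : ℝ) + 1) : ℤ) - 1 ≤ (logCirc α : ℤ) ∧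
      logCirc α ≤ logStar α := by
  set s := logStar α with hs
  set t := logStar ((s : ℝ) + 1) with ht
  have hne : ({k : ℕ | (k : ℝ) ≤ lg^[k] α}).Nonempty := ⟨0, by simpa using hα⟩
  constructor
  · -- lower bound
    by_cases hst : s ≤ t + 1
    · have : (0:ℤ) ≤ (logCirc α : ℤ) := Int.ofNat_nonneg _
      omega
    · push_neg at hst
      set k := s - 1 - t with hk
      have hkt : t + k < s := by omega
      have h1 : tower t < lg^[k] α := key α t k hkt
      have h2 : (s : ℝ) + 1 ≤ tower t := by
        have hspec := logStar_spec ((s : ℝ) + 1)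
        have h0 : lg^[t] ((s:ℝ)+1) ≤ tower 0 := by simpa [tower] using hspec
        simpa using (iter_le_tower t 0 ((s:ℝ)+1)).mp h0
      have hkmem : (k : ℝ) ≤ lg^[k] α := by
        have hks : (k : ℝ) ≤ s := by exact_mod_cast (by omega : k ≤ s)
        linarith
      have hle : k ≤ logCirc α := le_csSup (logCirc_bddAbove hα) hkmem
      have : (k : ℤ) = (s : ℤ) - t - 1 := by omega
      omega
  · exact csSup_le hne fun k hk => mem_le_logStar hα hk
end

section
/- Let μ : ℕ → ℕ be the Mersenne prime counting function: μ(n) is the number of primes of the form 2^k − 1 (k ∈ ℕ⁺) whose binary length is at most n (the binary length of 2^k − 1 is k). Assume that μ(n)/(e^γ · log₂ n) tends to 1 as n → ∞, where γ is the Euler–Mascheroni constant. Then for every real ε > 0 there exists N ∈ ℕ such that whenever p and q are Mersenne primes with p < q, no Mersenne prime lies strictly between p and q, and the binary length |p| of p satisfies |p| ≥ N, then |q| ≤ |p|^(1+ε). (Consequently, for every ε > 0 the set of Mersenne primes has an n^(1+ε)-nongappy subset.) -/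
/-- The binary length of `m`, i.e. `⌊log₂ m⌋ + 1` for `m ≥ 1`. -/
def blen (m : ℕ) : ℕ := Nat.log 2 m + 1

/-- A Mersenne prime: a prime of the form `2^k - 1` with `k ∈ ℕ⁺`. -/
def IsMersennePrime (m : ℕ) : Prop := Nat.Prime m ∧ ∃ k : ℕ, 1 ≤ k ∧ m = 2 ^ k - 1

/-- The Mersenne prime counting function: the number of Mersenne primes of binary
length at most `n` (the binary length of `2^k - 1` is `k`). -/
def mu (n : ℕ) : ℕ := ((Finset.Icc 1 n).filter (fun k => Nat.Prime (2 ^ k - 1))).card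

lemma blen_mersenne (k : ℕ) (hk : 1 ≤ k) : blen (2 ^ k - 1) = k := by
  have h : Nat.log 2 (2 ^ k - 1) = k - 1 := by
    apply Nat.log_eq_of_pow_le_of_lt_pow
    · have h2 : 2 ^ (k - 1) * 2 = 2 ^ k := by rw [← pow_succ]; congr 1; omega
      have h1 : 1 ≤ 2 ^ (k - 1) := Nat.one_le_two_pow
      omega
    · have h3 : k - 1 + 1 = k := by omega
      rw [h3]
      have h1 : 1 ≤ 2 ^ k := Nat.one_le_two_pow
      omega
  unfold blen; omega

lemma mu_mono : Monotone mu := by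
  intro m n h
  apply Finset.card_le_card
  apply Finset.filter_subset_filter
  exact Finset.Icc_subset_Icc_right h

lemma key_s6 (hμ : Filter.Tendsto
      (fun n : ℕ => (mu n : ℝ) / (Real.exp Real.eulerMascheroniConstant * Real.logb 2 n))
      Filter.atTop (nhds 1)) :
    ∀ ε : ℝ, 0 < ε → ε ≤ 1 → ∃ N : ℕ, 2 ≤ N ∧ ∀ p q : ℕ,
      IsMersennePrime p → IsMersennePrime q → p < q →
      (∀ r : ℕ, IsMersennePrime r → ¬(p < r ∧ r < q)) →
      N ≤ blen p →
      (blen q : ℝ) ≤ (blen p : ℝ) ^ ((1 : ℝ) + ε) := by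
  intro ε hε hε1
  set c : ℝ := Real.exp Real.eulerMascheroniConstant with hc
  have hcpos : 0 < c := Real.exp_pos _
  set δ : ℝ := ε / 8 with hδdef
  have hδ : 0 < δ := by positivity
  have hδ1 : δ ≤ 1 / 8 := by rw [hδdef]; linarith
  have hball : ∀ᶠ n : ℕ in Filter.atTop,
      (mu n : ℝ) / (c * Real.logb 2 n) ∈ Set.Ioo (1 - δ) (1 + δ) :=
    hμ.eventually (Ioo_mem_nhds (by linarith) (by linarith))
  obtain ⟨N₀, hN₀⟩ := Filter.eventually_atTop.mp hball
  obtain ⟨M, hM⟩ := exists_nat_ge (2 / ε)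
  -- For n ≥ max N₀ 2, bounds on mu n
  have hub : ∀ n : ℕ, N₀ ≤ n → 2 ≤ n →
      (1 - δ) * (c * Real.logb 2 n) < (mu n : ℝ) ∧
      (mu n : ℝ) < (1 + δ) * (c * Real.logb 2 n) := by
    intro n hn h2
    have hlog : 1 ≤ Real.logb 2 (n : ℝ) := by
      have h2' : (2:ℝ) ≤ (n:ℝ) := by exact_mod_cast h2
      have := Real.logb_le_logb_of_le (b := 2) one_lt_two (by norm_num : (0:ℝ) < 2) h2'
      simpa [Real.logb_self_eq_one (by norm_num : (1:ℝ) < 2)] using this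
    have hD : 0 < c * Real.logb 2 (n : ℝ) := by positivity
    have h := hN₀ n hn
    obtain ⟨h1, h2'⟩ := h
    constructor
    · calc (1 - δ) * (c * Real.logb 2 n) < ((mu n : ℝ) / (c * Real.logb 2 n)) * (c * Real.logb 2 n) := by
            exact mul_lt_mul_of_pos_right h1 hD
      _ = (mu n : ℝ) := by field_simp
    · calc (mu n : ℝ) = ((mu n : ℝ) / (c * Real.logb 2 n)) * (c * Real.logb 2 n) := by field_simp
      _ < (1 + δ) * (c * Real.logb 2 n) := mul_lt_mul_of_pos_right h2' hD
  refine ⟨max (max N₀ 2) (2 ^ (M + 2)), le_trans (by norm_num) (le_max_left _ _), ?_⟩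
  rintro p q ⟨hpp, a, ha1, rfl⟩ ⟨hqp, b, hb1, rfl⟩ hpq hno hNa
  rw [blen_mersenne a ha1] at *
  rw [blen_mersenne b hb1] at *
  have hab : a < b := by
    by_contra h
    push_neg at h
    have := Nat.pow_le_pow_right (by norm_num : 1 ≤ 2) h
    omega
  have haN₀ : N₀ ≤ a := le_trans (le_trans (le_max_left _ _) (le_max_left _ _)) hNa
  have ha2 : 2 ≤ a := le_trans (le_trans (le_max_right _ _) (le_max_left _ _)) hNa
  have haM : 2 ^ (M + 2) ≤ a := le_trans (le_max_right _ _) hNa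
  -- mu (b-1) ≤ mu a
  have hmule : mu (b - 1) ≤ mu a := by
    apply Finset.card_le_card
    intro k hk
    simp only [Finset.mem_filter, Finset.mem_Icc] at hk ⊢
    obtain ⟨⟨hk1, hk2⟩, hkp⟩ := hk
    refine ⟨⟨hk1, ?_⟩, hkp⟩
    by_contra h
    push_neg at h
    refine hno (2 ^ k - 1) ⟨hkp, k, hk1, rfl⟩ ⟨?_, ?_⟩
    · have h1 : (2:ℕ) ^ a < 2 ^ k := Nat.pow_lt_pow_right (by norm_num) h
      exact Nat.sub_lt_sub_right Nat.one_le_two_pow h1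
    · have hkb : k < b := by omega
      have h1 : (2:ℕ) ^ k < 2 ^ b := Nat.pow_lt_pow_right (by norm_num) hkb
      exact Nat.sub_lt_sub_right Nat.one_le_two_pow h1
  by_contra hcon
  push_neg at hcon
  -- hcon : (a:ℝ)^(1+ε) < b
  have hapos : (0:ℝ) < a := by positivity
  have hLlower : (2 : ℝ) / ε ≤ Real.logb 2 (a : ℝ) := by
    have h1 : ((2 : ℝ) ^ (M + 2 : ℕ) : ℝ) ≤ (a : ℝ) := by exact_mod_cast haM
    have h2 : Real.logb 2 ((2 : ℝ) ^ (M + 2 : ℕ)) ≤ Real.logb 2 (a : ℝ) :=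
      Real.logb_le_logb_of_le one_lt_two (by positivity) h1
    rw [Real.logb_pow, Real.logb_self_eq_one (by norm_num : (1:ℝ) < 2)] at h2
    have : (2 : ℝ) / ε ≤ (M : ℝ) + 2 := by
      have : (M : ℝ) ≤ (M : ℝ) + 2 := by linarith
      linarith [hM]
    calc (2:ℝ)/ε ≤ (M : ℝ) + 2 := this
      _ = ((M + 2 : ℕ) : ℝ) * 1 := by push_cast; ring
      _ ≤ _ := h2
  set L : ℝ := Real.logb 2 (a : ℝ) with hL
  have hL2 : 2 ≤ L := by
    have : (2:ℝ)/ε ≥ 2 := by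
      rw [ge_iff_le, le_div_iff₀ hε]; linarith
    linarith
  -- bounds
  have hbub := (hub a haN₀ ha2).2
  have hb2 : 2 ≤ b := by omega
  have hb1N₀ : N₀ ≤ b - 1 := le_trans haN₀ (by omega)
  have hb12 : 2 ≤ b - 1 := le_trans ha2 (by omega)
  have hblb := (hub (b - 1) hb1N₀ hb12).1
  -- logb 2 (b-1) ≥ (1+ε) L - 1
  have hcast : ((b - 1 : ℕ) : ℝ) = (b : ℝ) - 1 := by
    have : 1 ≤ b := hb1
    push_cast [this]; ring
  have hbhalf : (b : ℝ) / 2 ≤ ((b - 1 : ℕ) : ℝ) := by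
    rw [hcast]
    have : (2 : ℝ) ≤ (b : ℝ) := by exact_mod_cast hb2
    linarith
  have hlogb1 : Real.logb 2 ((b : ℝ)) - 1 ≤ Real.logb 2 ((b - 1 : ℕ) : ℝ) := by
    have h1 : Real.logb 2 ((b:ℝ)/2) ≤ Real.logb 2 ((b - 1 : ℕ) : ℝ) :=
      Real.logb_le_logb_of_le one_lt_two (by positivity) hbhalf
    rwa [Real.logb_div (by positivity) (by norm_num),
      Real.logb_self_eq_one (by norm_num : (1:ℝ) < 2)] at h1
  have hlogb2 : (1 + ε) * L ≤ Real.logb 2 ((b : ℝ)) := by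
    have h1 : Real.logb 2 ((a : ℝ) ^ ((1:ℝ) + ε)) ≤ Real.logb 2 ((b : ℝ)) :=
      Real.logb_le_logb_of_le one_lt_two (by positivity) (le_of_lt hcon)
    rwa [show Real.logb 2 ((a : ℝ) ^ ((1:ℝ)+ε)) = (1+ε) * L by
      rw [hL]; simp [Real.logb, Real.log_rpow hapos]; ring] at h1
  set L' : ℝ := Real.logb 2 ((b - 1 : ℕ) : ℝ) with hL'
  have hμle : (mu (b-1) : ℝ) ≤ (mu a : ℝ) := by exact_mod_cast hmule
  have hmain : (1 - δ) * (c * L') < (1 + δ) * (c * L) := by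
    calc (1 - δ) * (c * L') < (mu (b-1) : ℝ) := hblb
      _ ≤ (mu a : ℝ) := hμle
      _ < (1 + δ) * (c * L) := hbub
  have hmain2 : (1 - δ) * L' < (1 + δ) * L := by
    have h1 : (1 - δ) * (c * L') = c * ((1 - δ) * L') := by ring
    have h2 : (1 + δ) * (c * L) = c * ((1 + δ) * L) := by ring
    rw [h1, h2] at hmain
    exact lt_of_mul_lt_mul_left hmain (le_of_lt hcpos)
  have hL'ge : (1 + ε) * L - 1 ≤ L' := le_trans (by linarith) hlogb1
  have hεL : 2 ≤ ε * L := by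
    rw [div_le_iff₀ hε] at hLlower
    linarith [hLlower]
  nlinarith [mul_le_mul_of_nonneg_left hL'ge (by linarith : (0:ℝ) ≤ 1 - δ), hε, hε1, hL2]

theorem stmt6
    (hμ : Filter.Tendsto
      (fun n : ℕ => (mu n : ℝ) / (Real.exp Real.eulerMascheroniConstant * Real.logb 2 n))
      Filter.atTop (nhds 1)) :
    ∀ ε : ℝ, 0 < ε → ∃ N : ℕ, ∀ p q : ℕ,
      IsMersennePrime p → IsMersennePrime q → p < q →
      (∀ r : ℕ, IsMersennePrime r → ¬(p < r ∧ r < q)) →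
      N ≤ blen p →
      (blen q : ℝ) ≤ (blen p : ℝ) ^ ((1 : ℝ) + ε) := by
  intro ε hε
  obtain ⟨N, hN2, hN⟩ := key_s6 hμ (min ε 1) (lt_min hε one_pos) (min_le_right _ _)
  refine ⟨N, fun p q hp hq hpq hno hNp => ?_⟩
  have h1 := hN p q hp hq hpq hno hNp
  have hbp : (1 : ℝ) ≤ (blen p : ℝ) := by
    have : 1 ≤ blen p := by unfold blen; omega
    exact_mod_cast this
  calc (blen q : ℝ) ≤ (blen p : ℝ) ^ ((1 : ℝ) + min ε 1) := h1
    _ ≤ (blen p : ℝ) ^ ((1 : ℝ) + ε) :=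
      Real.rpow_le_rpow_of_exponent_le hbp (by linarith [min_le_left ε 1])
end

section
/- Let F : (0,∞) → (0,∞) and n₀ ∈ ℕ⁺ be such that F is nondecreasing on {t : t ≥ n₀} and for all real t ≥ n₀: F(t) ≥ t + 2 and for every c ∈ ℕ⁺, c·F(t) ≥ F(c·t). Let S ⊆ ℕ⁺ be F-nongappy and contain at least one element of binary length ≥ n₀. Let c₁ be the least element of S with |c₁| ≥ n₀, and set λ = 4 + |c₁|. Recursively define, for each integer n ≥ 2: b_n = Σ_{ℓ=1}^{n−1} c_ℓ·C(n,ℓ); a_n = the least element of S with a_n ≥ b_n (such an element exists, since an F-nongappy set is unbounded); and c_n = a_n − b_n. Then for every integer i ≥ 2, |c_i| ≤ (i−1)·F^[i−1](λ). -/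
/-!
Strong induction on `i`, with `X = F^[i-2] λ`. Every earlier `cℓ` has at most `(i-2)·X + |c₁|`
bits, so the binomial sum `bᵢ` has at most `(i-1)·X` of them, because the binomial coefficients
contribute at most `i` bits and `X ≥ λ + 2(i-2) ≥ |c₁| + i`. Let `m` be the largest element of `S`
below `bᵢ` (`c₁` is a candidate); its successor `m'` in `S` is at least `bᵢ`, so
`|cᵢ| ≤ |aᵢ| ≤ |m'| ≤ F(|m|) ≤ F(|bᵢ|)`, and `F((i-1)·X) ≤ (i-1)·F(X)` closes the induction.
-/

open Finset

lemma blen_mono : Monotone blen :=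
  fun _ _ h => Nat.succ_le_succ (Nat.log_mono_right h)

lemma lt_two_pow_blen (m : ℕ) : m < 2 ^ blen m :=
  Nat.lt_pow_succ_log_self (by norm_num) m

lemma blen_le_of_lt_two_pow {m k : ℕ} (hk : k ≠ 0) (h : m < 2 ^ k) : blen m ≤ k :=
  Nat.log_lt_of_lt_pow' hk h

section Nongappy

variable {F : ℝ → ℝ} {S : Set ℕ}

lemma exists_mem_lt_le_mem_of_nongappy
    (hSng : ∀ m ∈ S, ∃ m' ∈ S, m < m' ∧ (blen m' : ℝ) ≤ F (blen m))
    {s b : ℕ} (hs : s ∈ S) (hsb : s < b) :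
    ∃ m ∈ S, s ≤ m ∧ m < b ∧ ∃ m' ∈ S, b ≤ m' ∧ (blen m' : ℝ) ≤ F (blen m) := by
  classical
  set m := Nat.findGreatest (· ∈ S) (b - 1)
  have hm : m ∈ S := Nat.findGreatest_spec (m := s) (by omega) hs
  have hsm : s ≤ m := Nat.le_findGreatest (by omega) hs
  have hmb : m < b := by have := Nat.findGreatest_le (P := (· ∈ S)) (b - 1); omega
  obtain ⟨m', hm'S, hmm', hm'len⟩ := hSng m hm
  refine ⟨m, hm, hsm, hmb, m', hm'S, ?_, hm'len⟩
  by_contra! hm'b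
  exact Nat.findGreatest_is_greatest hmm' (by omega) hm'S

lemma blen_le_apply_blen_of_forall_ge {n₀ : ℝ} (hFmono : ∀ s t : ℝ, n₀ ≤ s → s ≤ t → F s ≤ F t)
    (hSng : ∀ m ∈ S, ∃ m' ∈ S, m < m' ∧ (blen m' : ℝ) ≤ F (blen m))
    {s b a : ℕ} (hs : s ∈ S) (hsn₀ : n₀ ≤ blen s) (hsb : s < b)
    (hleast : ∀ x ∈ S, b ≤ x → a ≤ x) :
    (blen a : ℝ) ≤ F (blen b) := by
  obtain ⟨m, -, hsm, hmb, m', hm'S, hbm', hm'len⟩ := exists_mem_lt_le_mem_of_nongappy hSng hs hsb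
  have hblen_sm : (blen s : ℝ) ≤ blen m := by exact_mod_cast blen_mono hsm
  have hblen_mb : (blen m : ℝ) ≤ blen b := by exact_mod_cast blen_mono hmb.le
  calc (blen a : ℝ) ≤ blen m' := by exact_mod_cast blen_mono (hleast m' hm'S hbm')
    _ ≤ F (blen m) := hm'len
    _ ≤ F (blen b) := hFmono _ _ (hsn₀.trans hblen_sm) hblen_mb

end Nongappy

section Iterate

variable {F : ℝ → ℝ} {n₀ : ℝ}

lemma add_two_mul_le_iterate (hF2 : ∀ t : ℝ, n₀ ≤ t → t + 2 ≤ F t) {x : ℝ} (hx : n₀ ≤ x)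
    (k : ℕ) : x + 2 * k ≤ F^[k] x := by
  induction k with
  | zero => simp
  | succ k ih =>
    rw [Function.iterate_succ_apply']
    have := hF2 _ (by linarith [(k.cast_nonneg : (0 : ℝ) ≤ k)])
    push_cast
    linarith

lemma iterate_le_iterate (hF2 : ∀ t : ℝ, n₀ ≤ t → t + 2 ≤ F t) {x : ℝ} (hx : n₀ ≤ x)
    {k l : ℕ} (hkl : k ≤ l) : F^[k] x ≤ F^[l] x := by
  induction l, hkl using Nat.le_induction with
  | base => exact le_rfl
  | succ l _ ih =>
    rw [Function.iterate_succ_apply']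
    have := add_two_mul_le_iterate hF2 hx l
    linarith [hF2 _ (by linarith [(l.cast_nonneg : (0 : ℝ) ≤ l)])]

end Iterate

/-- The paper's `bₙ`. -/
def partialBinomSum (c : ℕ → ℕ) (n : ℕ) : ℕ := ∑ ℓ ∈ Ico 1 n, c ℓ * n.choose ℓ

lemma apply_one_mul_le_partialBinomSum (c : ℕ → ℕ) {n : ℕ} (hn : 2 ≤ n) :
    c 1 * n ≤ partialBinomSum c n := by
  have h1 : 1 ∈ Ico 1 n := mem_Ico.2 ⟨le_rfl, hn⟩
  calc c 1 * n = c 1 * n.choose 1 := by rw [Nat.choose_one_right]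
    _ ≤ partialBinomSum c n :=
      single_le_sum (f := fun ℓ => c ℓ * n.choose ℓ) (fun _ _ => Nat.zero_le _) h1

lemma apply_one_le_partialBinomSum (c : ℕ → ℕ) {n : ℕ} (hn : 2 ≤ n) : c 1 ≤ partialBinomSum c n :=
  (Nat.le_mul_of_pos_right _ (by omega)).trans (apply_one_mul_le_partialBinomSum c hn)

lemma apply_one_lt_partialBinomSum {c : ℕ → ℕ} (hc1 : 1 ≤ c 1) {n : ℕ} (hn : 2 ≤ n) :
    c 1 < partialBinomSum c n :=
  (lt_mul_of_one_lt_right (by omega) (by omega)).trans_le (apply_one_mul_le_partialBinomSum c hn)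

lemma partialBinomSum_le {c : ℕ → ℕ} {n M : ℕ} (hM : ∀ ℓ ∈ Ico 1 n, c ℓ ≤ M) :
    partialBinomSum c n ≤ M * 2 ^ n :=
  calc partialBinomSum c n ≤ ∑ ℓ ∈ Ico 1 n, M * n.choose ℓ :=
        sum_le_sum fun ℓ hℓ => Nat.mul_le_mul_right _ (hM ℓ hℓ)
    _ ≤ ∑ ℓ ∈ range (n + 1), M * n.choose ℓ :=
        sum_le_sum_of_subset fun ℓ hℓ => by simp only [mem_Ico, mem_range] at hℓ ⊢; omega
    _ = M * 2 ^ n := by rw [← mul_sum, Nat.sum_range_choose]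

lemma blen_partialBinomSum_le {c : ℕ → ℕ} {n M : ℕ} (hM : ∀ ℓ ∈ Ico 1 n, c ℓ ≤ M) :
    blen (partialBinomSum c n) ≤ blen M + n :=
  blen_le_of_lt_two_pow (by unfold blen; omega) <|
    calc partialBinomSum c n ≤ M * 2 ^ n := partialBinomSum_le hM
      _ < 2 ^ blen M * 2 ^ n := Nat.mul_lt_mul_of_pos_right (lt_two_pow_blen M) (by positivity)
      _ = 2 ^ (blen M + n) := (pow_add _ _ _).symm

theorem blen_le_mul_iterate {F : ℝ → ℝ} {n₀ : ℝ}
    (hFmono : ∀ s t : ℝ, n₀ ≤ s → s ≤ t → F s ≤ F t)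
    (hF2 : ∀ t : ℝ, n₀ ≤ t → t + 2 ≤ F t)
    (hFc : ∀ t : ℝ, n₀ ≤ t → ∀ c : ℕ, 1 ≤ c → F ((c : ℝ) * t) ≤ (c : ℝ) * F t)
    {c : ℕ → ℕ} (hc1 : n₀ ≤ blen (c 1))
    (hstep : ∀ n, 2 ≤ n → (blen (c n) : ℝ) ≤ F (blen (partialBinomSum c n)))
    (i : ℕ) (hi : 2 ≤ i) :
    (blen (c i) : ℝ) ≤ ((i : ℝ) - 1) * F^[i - 1] (4 + (blen (c 1) : ℝ)) := by
  set L : ℝ := 4 + (blen (c 1) : ℝ)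
  have hn₀L : n₀ ≤ L := by linarith
  induction i using Nat.strong_induction_on with
  | _ i IH =>
  set X := F^[i - 2] L
  have hLX : L + 2 * ((i : ℝ) - 2) ≤ X := by
    have := add_two_mul_le_iterate hF2 hn₀L (i - 2)
    rwa [Nat.cast_sub hi, Nat.cast_ofNat] at this
  have hi2 : (2 : ℝ) ≤ i := by exact_mod_cast hi
  have hn₀X : n₀ ≤ X := by linarith
  obtain ⟨k, hk, hkmax⟩ := exists_max_image (Ico 1 i) c ⟨1, mem_Ico.2 ⟨le_rfl, hi⟩⟩
  have hck : (blen (c k) : ℝ) ≤ ((i : ℝ) - 2) * X + blen (c 1) := by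
    obtain ⟨hk1, hki⟩ := mem_Ico.1 hk
    obtain rfl | hk2 : k = 1 ∨ 2 ≤ k := by omega
    · nlinarith
    · have hki' : (k : ℝ) + 1 ≤ i := by exact_mod_cast hki
      have hk2' : (2 : ℝ) ≤ k := by exact_mod_cast hk2
      have hLk := add_two_mul_le_iterate hF2 hn₀L (k - 1)
      calc (blen (c k) : ℝ) ≤ ((k : ℝ) - 1) * F^[k - 1] L := IH k hki hk2
        _ ≤ ((i : ℝ) - 2) * X :=
          mul_le_mul (by linarith) (iterate_le_iterate hF2 hn₀L (by omega))
            (by linarith [((k - 1).cast_nonneg : (0 : ℝ) ≤ (k - 1 : ℕ))]) (by linarith)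
        _ ≤ _ := le_add_of_nonneg_right (Nat.cast_nonneg _)
  have hblen_sum : (blen (partialBinomSum c i) : ℝ) ≤ ((i : ℝ) - 1) * X := by
    have : (blen (partialBinomSum c i) : ℝ) ≤ blen (c k) + i := by
      exact_mod_cast blen_partialBinomSum_le hkmax
    nlinarith
  have hn₀b : n₀ ≤ blen (partialBinomSum c i) :=
    hc1.trans (by exact_mod_cast blen_mono (apply_one_le_partialBinomSum c hi))
  have hFc' : F (((i : ℝ) - 1) * X) ≤ ((i : ℝ) - 1) * F X := by
    have := hFc X hn₀X (i - 1) (by omega)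
    rwa [Nat.cast_sub (by omega), Nat.cast_one] at this
  calc (blen (c i) : ℝ) ≤ F (blen (partialBinomSum c i)) := hstep i hi
    _ ≤ F (((i : ℝ) - 1) * X) := hFmono _ _ hn₀b hblen_sum
    _ ≤ ((i : ℝ) - 1) * F X := hFc'
    _ = _ := by rw [show i - 1 = i - 2 + 1 by omega, Function.iterate_succ_apply']

theorem stmt11_general
    (F : ℝ → ℝ)
    (n₀ : ℕ)
    (hFmono : ∀ s t : ℝ, (n₀ : ℝ) ≤ s → s ≤ t → F s ≤ F t)
    (hF2 : ∀ t : ℝ, (n₀ : ℝ) ≤ t → t + 2 ≤ F t)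
    (hFc : ∀ t : ℝ, (n₀ : ℝ) ≤ t → ∀ c : ℕ, 1 ≤ c → F ((c : ℝ) * t) ≤ (c : ℝ) * F t)
    (S : Set ℕ) (hSpos : ∀ m ∈ S, 1 ≤ m)
    -- S is F-nongappy:
    (hSng : ∀ m ∈ S, ∃ m' ∈ S, m < m' ∧ (blen m' : ℝ) ≤ F (blen m))
    (a b c : ℕ → ℕ)
    -- c 1 is the least element of S of binary length ≥ n₀ (one exists):
    (hc1mem : c 1 ∈ S) (hc1len : n₀ ≤ blen (c 1))
    -- the recurrences defining b n, a n, and c n for n ≥ 2: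
    (hb : ∀ n : ℕ, 2 ≤ n → b n = ∑ ℓ ∈ Finset.Ico 1 n, c ℓ * Nat.choose n ℓ)
    (ha : ∀ n : ℕ, 2 ≤ n → a n ∈ S ∧ b n ≤ a n ∧ ∀ s ∈ S, b n ≤ s → a n ≤ s)
    (hc : ∀ n : ℕ, 2 ≤ n → c n = a n - b n)
    (i : ℕ) (hi : 2 ≤ i) :
    (blen (c i) : ℝ) ≤ ((i : ℝ) - 1) * F^[i - 1] (4 + (blen (c 1) : ℝ)) := by
  have hn₀c1 : (n₀ : ℝ) ≤ blen (c 1) := by exact_mod_cast hc1len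
  refine blen_le_mul_iterate hFmono hF2 hFc hn₀c1 (fun n hn => ?_) i hi
  have hbn : b n = partialBinomSum c n := hb n hn
  obtain ⟨-, -, hleast⟩ := ha n hn
  calc (blen (c n) : ℝ) ≤ blen (a n) := by exact_mod_cast blen_mono (hc n hn ▸ Nat.sub_le _ _)
    _ ≤ F (blen (b n)) := blen_le_apply_blen_of_forall_ge hFmono hSng hc1mem hn₀c1
          (hbn ▸ apply_one_lt_partialBinomSum (hSpos _ hc1mem) hn) hleast
    _ = F (blen (partialBinomSum c n)) := by rw [hbn]

theorem stmt11
    (F : ℝ → ℝ) (hFpos : ∀ t : ℝ, 0 < t → 0 < F t)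
    (n₀ : ℕ) (hn₀ : 1 ≤ n₀)
    (hFmono : ∀ s t : ℝ, (n₀ : ℝ) ≤ s → s ≤ t → F s ≤ F t)
    (hF2 : ∀ t : ℝ, (n₀ : ℝ) ≤ t → t + 2 ≤ F t)
    (hFc : ∀ t : ℝ, (n₀ : ℝ) ≤ t → ∀ c : ℕ, 1 ≤ c → F ((c : ℝ) * t) ≤ (c : ℝ) * F t)
    (S : Set ℕ) (hSpos : ∀ m ∈ S, 1 ≤ m)
    -- S is F-nongappy:
    (hSne : S.Nonempty)
    (hSng : ∀ m ∈ S, ∃ m' ∈ S, m < m' ∧ (blen m' : ℝ) ≤ F (blen m))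
    (a b c : ℕ → ℕ)
    -- c 1 is the least element of S of binary length ≥ n₀ (one exists):
    (hc1mem : c 1 ∈ S) (hc1len : n₀ ≤ blen (c 1))
    (hc1least : ∀ s ∈ S, n₀ ≤ blen s → c 1 ≤ s)
    -- the recurrences defining b n, a n, and c n for n ≥ 2:
    (hb : ∀ n : ℕ, 2 ≤ n → b n = ∑ ℓ ∈ Finset.Ico 1 n, c ℓ * Nat.choose n ℓ)
    (ha : ∀ n : ℕ, 2 ≤ n → a n ∈ S ∧ b n ≤ a n ∧ ∀ s ∈ S, b n ≤ s → a n ≤ s)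
    (hc : ∀ n : ℕ, 2 ≤ n → c n = a n - b n)
    (i : ℕ) (hi : 2 ≤ i) :
    (blen (c i) : ℝ) ≤ ((i : ℝ) - 1) * F^[i - 1] (4 + (blen (c 1) : ℝ)) :=
  stmt11_general F n₀ hFmono hF2 hFc S hSpos hSng a b c hc1mem hc1len hb ha hc i hi
end

section
/- Let k be a real number with k > 1, let d ∈ ℕ, and let λ be a real number with λ ≥ 1. For n ∈ ℕ define j(n) = ⌊d + (log₂ log₂ n)/(2·log₂ k)⌋. Then there exist β ∈ ℕ⁺ and N ∈ ℕ such that for all natural numbers n ≥ N, (j(n)·λ)^(k^j(n)) ≤ n^β. -/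
theorem stmt14 (k : ℝ) (hk : 1 < k) (d : ℕ) (lam : ℝ) (hlam : 1 ≤ lam) :
    ∃ β : ℕ, 1 ≤ β ∧ ∃ N : ℕ, ∀ n : ℕ, N ≤ n →
      ((((⌊(d : ℝ) + lg (lg (n : ℝ)) / (2 * lg k)⌋.toNat : ℕ) : ℝ) * lam)
          ^ (k ^ (⌊(d : ℝ) + lg (lg (n : ℝ)) / (2 * lg k)⌋.toNat : ℕ)))
        ≤ (n : ℝ) ^ β := by
  have hk0 : (0:ℝ) < k := by linarith
  have hlogk : 0 < Real.log k := Real.log_pos hk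
  have hlog2 : 0 < Real.log 2 := Real.log_pos one_lt_two
  set C : ℝ := max 1 (((d:ℝ) + 1/(2*Real.log k)) * lam) with hCdef
  have hC1 : (1:ℝ) ≤ C := le_max_left _ _
  have hlogC : 0 ≤ Real.log C := Real.log_nonneg hC1
  set c : ℝ := k^d * (Real.log C + 2) / Real.log 2 with hcdef
  refine ⟨⌈c⌉₊ + 1, Nat.le_add_left 1 _, 2, ?_⟩
  intro n hn
  have hn2 : (2:ℝ) ≤ (n:ℝ) := by exact_mod_cast hn
  have hn0 : (0:ℝ) < n := by linarith
  set L : ℝ := lg n with hLdef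
  have hLeq : L = Real.log n / Real.log 2 := by
    rw [hLdef]; unfold lg
    rw [max_eq_right (by linarith : (1:ℝ) ≤ (n:ℝ)), Real.logb]
  have hL1 : (1:ℝ) ≤ L := by
    rw [hLeq, le_div_iff₀ hlog2, one_mul]
    exact Real.log_le_log (by norm_num) hn2
  have hL0 : (0:ℝ) < L := by linarith
  have hlgk : lg k = Real.log k / Real.log 2 := by
    unfold lg; rw [max_eq_right (le_of_lt hk), Real.logb]
  have hlgL : lg L = Real.log L / Real.log 2 := by
    unfold lg; rw [max_eq_right hL1, Real.logb]
  set y : ℝ := (d:ℝ) + lg (lg n) / (2 * lg k) with hydef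
  have hy : y = (d:ℝ) + Real.log L / (2 * Real.log k) := by
    rw [hydef, ← hLdef, hlgL, hlgk]
    field_simp
  have hlogL0 : 0 ≤ Real.log L := Real.log_nonneg hL1
  have hy0 : 0 ≤ y := by
    rw [hy]; positivity
  set j : ℕ := (⌊y⌋.toNat : ℕ) with hjdef
  have hjy : (j:ℝ) ≤ y := by
    rw [hjdef]
    rw [show ((⌊y⌋.toNat : ℕ) : ℝ) = ((⌊y⌋ : ℤ) : ℝ) by
      exact_mod_cast congrArg Int.cast (Int.toNat_of_nonneg (Int.floor_nonneg.2 hy0))]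
    exact Int.floor_le y
  rcases Nat.eq_zero_or_pos j with hj0 | hj1
  · rw [hj0]
    simp only [Nat.cast_zero, zero_mul, pow_zero, Real.rpow_one]
    positivity
  · have hj1' : (1:ℝ) ≤ (j:ℝ) := by exact_mod_cast hj1
    have hjlam1 : (1:ℝ) ≤ (j:ℝ) * lam := by nlinarith
    have hjlam0 : (0:ℝ) < (j:ℝ) * lam := by linarith
    -- S = sqrt L
    set S : ℝ := Real.exp (Real.log L * (1/2)) with hSdef
    have hS1 : (1:ℝ) ≤ S := Real.one_le_exp (by positivity)
    have hSS : S * S = L := by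
      rw [hSdef, ← Real.exp_add]
      rw [show Real.log L * (1/2) + Real.log L * (1/2) = Real.log L by ring]
      exact Real.exp_log hL0
    -- bound k^j ≤ k^d * S
    have hkj : k ^ j ≤ k ^ d * S := by
      calc k ^ j = k ^ ((j:ℝ)) := (Real.rpow_natCast k j).symm
        _ ≤ k ^ y := (Real.rpow_le_rpow_left_iff hk).2 hjy
        _ = k ^ ((d:ℝ)) * k ^ (Real.log L / (2 * Real.log k)) := by
            rw [hy, Real.rpow_add hk0]
        _ = k ^ d * S := by
            rw [Real.rpow_natCast, hSdef, Real.rpow_def_of_pos hk0]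
            congr 2
            field_simp
    have hkj0 : (0:ℝ) ≤ k ^ j := by positivity
    -- bound j*lam ≤ C * L
    have hlogLleL : Real.log L ≤ L := by
      have := Real.log_le_sub_one_of_pos hL0; linarith
    have hjlamCL : (j:ℝ) * lam ≤ C * L := by
      have he : 0 < 1/(2*Real.log k) := by positivity
      have h1 : y ≤ ((d:ℝ) + 1/(2*Real.log k)) * L := by
        rw [hy]
        have h2 : Real.log L * (1/(2 * Real.log k)) ≤ L * (1/(2 * Real.log k)) :=
          mul_le_mul_of_nonneg_right hlogLleL he.le
        have h2' : Real.log L / (2 * Real.log k) = Real.log L * (1/(2 * Real.log k)) := by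
          ring
        have h3 : (d:ℝ) * 1 ≤ (d:ℝ) * L :=
          mul_le_mul_of_nonneg_left hL1 (Nat.cast_nonneg d)
        have h4 : ((d:ℝ) + 1/(2*Real.log k)) * L = (d:ℝ)*L + L * (1/(2*Real.log k)) := by
          ring
        linarith
      have ha : (j:ℝ)*lam ≤ y*lam := mul_le_mul_of_nonneg_right hjy (by linarith)
      have hb : y*lam ≤ (((d:ℝ) + 1/(2*Real.log k)) * L)*lam :=
        mul_le_mul_of_nonneg_right h1 (by linarith)
      have hc' : (((d:ℝ) + 1/(2*Real.log k)) * L)*lam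
          = (((d:ℝ) + 1/(2*Real.log k)) * lam)*L := by ring
      have hd' : (((d:ℝ) + 1/(2*Real.log k)) * lam)*L ≤ C*L :=
        mul_le_mul_of_nonneg_right (le_max_right _ _) hL0.le
      exact ha.trans (hb.trans (hc'.le.trans hd'))
    -- bound log(j*lam)
    have hlogjlam0 : 0 ≤ Real.log ((j:ℝ)*lam) := Real.log_nonneg hjlam1
    have hlogL2S : Real.log L ≤ 2 * S - 2 := by
      have h7 : Real.log S ≤ S - 1 := Real.log_le_sub_one_of_pos (by positivity)
      have h8 : Real.log S = Real.log L * (1/2) := by rw [hSdef, Real.log_exp]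
      linarith
    have hlogjlam : Real.log ((j:ℝ)*lam) ≤ (Real.log C + 2) * S := by
      have h9 : Real.log ((j:ℝ)*lam) ≤ Real.log (C * L) :=
        Real.log_le_log hjlam0 hjlamCL
      have h10 : Real.log (C * L) = Real.log C + Real.log L :=
        Real.log_mul (by linarith) (by linarith)
      have h11 : Real.log C * 1 ≤ Real.log C * S := mul_le_mul_of_nonneg_left hS1 hlogC
      have h12 : (Real.log C + 2) * S = Real.log C * S + 2 * S := by ring
      linarith
    -- final
    have hβ : c ≤ ((⌈c⌉₊ + 1 : ℕ) : ℝ) := by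
      push_cast
      have := Nat.le_ceil c
      linarith
    have hlogn : 0 < Real.log n := Real.log_pos (by linarith)
    have hmain : Real.log ((j:ℝ)*lam) * (k ^ j) ≤ Real.log n * ((⌈c⌉₊ + 1 : ℕ) : ℝ) := by
      have h11 : Real.log ((j:ℝ)*lam) * (k ^ j) ≤ ((Real.log C + 2) * S) * (k ^ d * S) := by
        apply mul_le_mul hlogjlam hkj hkj0 (by positivity)
      have h12 : ((Real.log C + 2) * S) * (k ^ d * S) = k^d * (Real.log C + 2) * L := by
        rw [← hSS]; ring
      have h13 : k^d * (Real.log C + 2) * L = c * Real.log n := by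
        rw [hcdef, hLeq]; field_simp
      have h14 : c * Real.log n ≤ Real.log n * ((⌈c⌉₊ + 1 : ℕ) : ℝ) := by
        have := mul_le_mul_of_nonneg_right hβ hlogn.le
        linarith [this]
      linarith
    calc ((j:ℝ) * lam) ^ (k ^ j) = Real.exp (Real.log ((j:ℝ)*lam) * (k ^ j)) := by
          rw [Real.rpow_def_of_pos hjlam0]
      _ ≤ Real.exp (Real.log n * ((⌈c⌉₊ + 1 : ℕ) : ℝ)) := Real.exp_le_exp.2 hmain
      _ = (n:ℝ) ^ ((⌈c⌉₊ + 1 : ℕ) : ℝ) := by rw [Real.rpow_def_of_pos hn0]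
      _ = (n:ℝ) ^ (⌈c⌉₊ + 1 : ℕ) := Real.rpow_natCast _ _
end

section
/- Let k ∈ ℕ⁺ and define F : (0,∞) → (0,∞) by F(t) = t^((log t)^k). Then for every real x ≥ 2 and every j ∈ ℕ, F^[j](x) ≤ x^((log x)^(2^(2^j) · k^(2^j))). -/
lemma lg_of_one_le {x : ℝ} (hx : 1 ≤ x) : lg x = Real.logb 2 x := by
  unfold lg; rw [max_eq_right hx]

lemma one_le_lg {x : ℝ} (hx : 2 ≤ x) : 1 ≤ lg x := by
  rw [lg_of_one_le (by linarith)]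
  have := Real.logb_le_logb_of_le (b := 2) (x := 2) (y := x) (by norm_num) (by norm_num) hx
  simpa [Real.logb_self_eq_one (b := 2) (by norm_num)] using this

lemma lg_mono : Monotone lg := by
  intro a b hab
  unfold lg
  exact Real.logb_le_logb_of_le (by norm_num) (by positivity) (max_le_max le_rfl hab)

lemma lg_rpow {x e : ℝ} (hx : 1 ≤ x) (he : 0 ≤ e) :
    lg (x ^ e) = e * lg x := by
  have hx0 : 0 < x := by linarith
  have h1 : (1:ℝ) ≤ x ^ e := Real.one_le_rpow hx he
  rw [lg_of_one_le h1, lg_of_one_le hx]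
  unfold Real.logb
  rw [Real.log_rpow hx0]
  ring

theorem stmt17 (k : ℕ) (hk : 1 ≤ k) :
    ∀ x : ℝ, 2 ≤ x → ∀ j : ℕ,
      (fun t : ℝ => t ^ ((lg t) ^ k))^[j] x ≤
        x ^ ((lg x) ^ (2 ^ (2 ^ j) * k ^ (2 ^ j))) := by
  intro x hx j
  have hx1 : (1:ℝ) ≤ x := by linarith
  have hlg1 : 1 ≤ lg x := one_le_lg hx
  have hlg0 : 0 ≤ lg x := by linarith
  -- strengthened induction
  have key : ∀ j : ℕ, 2 ≤ (fun t : ℝ => t ^ ((lg t) ^ k))^[j] x ∧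
      ∃ e : ℕ, e + 1 ≤ 2 ^ (2 ^ j) * k ^ (2 ^ j) ∧
        (fun t : ℝ => t ^ ((lg t) ^ k))^[j] x ≤ x ^ ((lg x) ^ e) := by
    intro j
    induction j with
    | zero =>
      refine ⟨by simpa using hx, 0, ?_, ?_⟩
      · simp only [pow_zero, pow_one]; omega
      · simp
    | succ j ih =>
      obtain ⟨hy2, e, he, hle⟩ := ih
      set F := fun t : ℝ => t ^ ((lg t) ^ k) with hF
      set y := F^[j] x with hy
      have hy1 : (1:ℝ) ≤ y := by linarith
      have hy0 : (0:ℝ) ≤ y := by linarith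
      have hlgy1 : 1 ≤ lg y := one_le_lg hy2
      have hstep : F^[j+1] x = y ^ ((lg y) ^ k) := by
        rw [Function.iterate_succ_apply']
      constructor
      · rw [hstep]
        calc (2:ℝ) ≤ y := hy2
          _ = y ^ (1:ℝ) := (Real.rpow_one y).symm
          _ ≤ y ^ ((lg y) ^ k) := Real.rpow_le_rpow_of_exponent_le hy1
              (one_le_pow₀ hlgy1)
      · refine ⟨e + k * (e + 1), ?_, ?_⟩
      -- arithmetic bound
        · have h2k : k + 1 ≤ 2 * k := by omega
          have h2 : 2 ≤ 2 ^ (2 ^ j) := by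
            calc 2 = 2 ^ 1 := (pow_one 2).symm
              _ ≤ 2 ^ (2 ^ j) := Nat.pow_le_pow_right (by norm_num) Nat.one_le_two_pow
          have hkk : k ≤ k ^ (2 ^ j) := Nat.le_self_pow (by positivity) k
          calc e + k * (e + 1) + 1 = (e + 1) * (k + 1) := by ring
            _ ≤ (2 ^ (2 ^ j) * k ^ (2 ^ j)) * (2 * k) :=
                Nat.mul_le_mul he h2k
            _ ≤ (2 ^ (2 ^ j) * k ^ (2 ^ j)) * (2 ^ (2 ^ j) * k ^ (2 ^ j)) :=
                Nat.mul_le_mul_left _ (Nat.mul_le_mul h2 hkk)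
            _ = 2 ^ (2 ^ (j+1)) * k ^ (2 ^ (j+1)) := by
                rw [pow_succ, pow_mul, pow_mul]; ring
        -- analytic bound
        · have hlgy : lg y ≤ (lg x) ^ (e + 1) := by
            calc lg y ≤ lg (x ^ ((lg x) ^ e)) := lg_mono hle
              _ = (lg x) ^ e * lg x := lg_rpow hx1 (by positivity)
              _ = (lg x) ^ (e + 1) := by rw [pow_succ]
          have hlgyk : (lg y) ^ k ≤ (lg x) ^ (k * (e + 1)) := by
            calc (lg y) ^ k ≤ ((lg x) ^ (e+1)) ^ k :=
                pow_le_pow_left₀ (by linarith) hlgy k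
              _ = (lg x) ^ (k * (e+1)) := by rw [← pow_mul, mul_comm]
          rw [hstep]
          calc y ^ ((lg y) ^ k) ≤ y ^ ((lg x) ^ (k * (e + 1))) :=
              Real.rpow_le_rpow_of_exponent_le hy1 hlgyk
            _ ≤ (x ^ ((lg x) ^ e)) ^ ((lg x) ^ (k * (e + 1))) :=
              Real.rpow_le_rpow hy0 hle (by positivity)
            _ = x ^ ((lg x) ^ e * (lg x) ^ (k * (e + 1))) :=
              (Real.rpow_mul (by linarith) _ _).symm
            _ = x ^ ((lg x) ^ (e + k * (e + 1))) := by rw [← pow_add]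
  obtain ⟨_, e, he, hle⟩ := key j
  calc (fun t : ℝ => t ^ ((lg t) ^ k))^[j] x ≤ x ^ ((lg x) ^ e) := hle
    _ ≤ x ^ ((lg x) ^ (2 ^ (2 ^ j) * k ^ (2 ^ j))) := by
      apply Real.rpow_le_rpow_of_exponent_le hx1
      exact pow_le_pow_right₀ hlg1 (by omega)
end

section
/- Let λ ∈ ℕ with λ ≥ 6 and define F : (0,∞) → (0,∞) by F(t) = 2^t. Then for every natural number n ≥ 1 with log⊛(n) ≥ λ, setting j = ⌊log⊛(n)/λ⌋, it holds that F^[j](j·λ) ≤ n. -/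
lemma lg_le_self {x : ℝ} (hx : 0 ≤ x) : lg x ≤ x := by
  rcases le_total x 1 with hx1 | hx1
  · simp [lg, max_eq_left hx1, hx]
  · rw [lg, max_eq_right hx1, Real.logb_le_iff_le_rpow one_lt_two (by linarith)]
    have bernoulli : 1 + x * 1 ≤ (1 + 1 : ℝ) ^ x :=
      one_add_mul_self_le_rpow_one_add (by norm_num) hx1
    norm_num at bernoulli
    linarith

lemma antitone_lg_iterate {y : ℝ} (hy : 0 ≤ y) : Antitone fun m => lg^[m] y := by
  refine antitone_nat_of_succ_le fun m => ?_
  rw [Function.iterate_succ_apply']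
  cases m with
  | zero => exact lg_le_self hy
  | succ m =>
    rw [Function.iterate_succ_apply']
    exact lg_le_self (lg_nonneg _)

lemma logCirc_le_lg_iterate_logCirc {y : ℝ} (hy : 0 ≤ y) :
    (logCirc y : ℝ) ≤ lg^[logCirc y] y := by
  have hzero : 0 ∈ {k : ℕ | (k : ℝ) ≤ lg^[k] y} := by simpa using hy
  have hbdd : BddAbove {k : ℕ | (k : ℝ) ≤ lg^[k] y} := by
    refine ⟨⌈y⌉₊, fun k hk => ?_⟩
    have : (k : ℝ) ≤ ⌈y⌉₊ :=
      hk.trans ((antitone_lg_iterate hy (Nat.zero_le k)).trans (Nat.le_ceil y))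
    exact_mod_cast this
  exact Nat.sSup_mem ⟨0, hzero⟩ hbdd

lemma two_rpow_le_of_le_lg {a y : ℝ} (ha : 0 < a) (h : a ≤ lg y) : (2 : ℝ) ^ a ≤ y := by
  have hmax : (2 : ℝ) ^ a ≤ max 1 y :=
    (Real.le_logb_iff_rpow_le one_lt_two (by positivity)).mp h
  have hone : (1 : ℝ) < max 1 y := (Real.one_lt_rpow one_lt_two ha).trans_le hmax
  rwa [max_eq_right (lt_max_iff.mp hone |>.resolve_left (lt_irrefl 1)).le] at hmax

lemma two_rpow_iterate_le_of_le_lg_iterate (j : ℕ) {a y : ℝ} (ha : 0 < a)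
    (h : a ≤ lg^[j] y) : (fun t : ℝ => (2 : ℝ) ^ t)^[j] a ≤ y := by
  induction j generalizing a with
  | zero => exact h
  | succ j ih =>
    rw [Function.iterate_succ_apply'] at h
    rw [Function.iterate_succ_apply]
    exact ih (by positivity) (two_rpow_le_of_le_lg ha h)

theorem stmt18_general (lam : ℕ) (n : ℕ)
    (h : lam ≤ logCirc (n : ℝ)) :
    (fun t : ℝ => (2 : ℝ) ^ t)^[logCirc (n : ℝ) / lam]
        (((logCirc (n : ℝ) / lam : ℕ) : ℝ) * (lam : ℝ)) ≤ (n : ℝ) := by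
  rcases lam.eq_zero_or_pos with rfl | hlam
  · simp
  set k := logCirc (n : ℝ)
  have hj : 0 < k / lam := Nat.div_pos h hlam
  refine two_rpow_iterate_le_of_le_lg_iterate _ (by positivity) ?_
  calc ((k / lam : ℕ) : ℝ) * lam ≤ k := by exact_mod_cast Nat.div_mul_le_self k lam
    _ ≤ lg^[k] (n : ℝ) := logCirc_le_lg_iterate_logCirc n.cast_nonneg
    _ ≤ lg^[k / lam] (n : ℝ) := antitone_lg_iterate n.cast_nonneg (Nat.div_le_self k lam)

theorem stmt18 (lam : ℕ) (hlam : 6 ≤ lam) (n : ℕ) (hn : 1 ≤ n)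
    (h : lam ≤ logCirc (n : ℝ)) :
    (fun t : ℝ => (2 : ℝ) ^ t)^[logCirc (n : ℝ) / lam]
        (((logCirc (n : ℝ) / lam : ℕ) : ℝ) * (lam : ℝ)) ≤ (n : ℝ) :=
  stmt18_general lam n h
end
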